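/- Fix n ≥ 1 and a set E ⊆ Fin n × Fin n × Fin n of hyperedges, and let V, M and δ be as in the 3-dimensional matching reduction. Then there exists a map F : V → M taking at most n distinct values, with balanced fibers, such that δ(v, F v) ≤ 1 for every v ∈ V, if and only if E contains a perfect matching, i.e., a subset H ⊆ E of cardinality n such that the maps e ↦ e.1, e ↦ e.2 and e ↦ e.3 are each injective on H. (Hence the fair n-center cost of the instance is 1 when a perfect matching exists and 2 otherwise.) -/

import Mathlib

open scoped Classical

/-- Vertex `(j,u)` of the tripartite hypergraph is incident to hyperedge `e`
iff the `j`-th coordinate of `e` is `u`. -/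
def Incident {n : ℕ} (v : Fin 3 × Fin n) (e : Fin n × Fin n × Fin n) : Prop :=
  (v.1 = 0 ∧ e.1 = v.2) ∨ (v.1 = 1 ∧ e.2.1 = v.2) ∨ (v.1 = 2 ∧ e.2.2 = v.2)

/-- The distance of the 3-dimensional matching reduction on `M = V ⊕ E`:
`0` on the diagonal, `1` between a vertex and an incident hyperedge, `2` otherwise. -/
noncomputable def delta {n : ℕ} (E : Set (Fin n × Fin n × Fin n)) :
    ((Fin 3 × Fin n) ⊕ ↥E) → ((Fin 3 × Fin n) ⊕ ↥E) → ℝ := fun x y =>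
  if x = y then 0
  else
    match x, y with
    | Sum.inl v, Sum.inr e => if Incident v e.1 then 1 else 2
    | Sum.inr e, Sum.inl v => if Incident v e.1 then 1 else 2
    | _, _ => 2

/-- A map takes at most `k` distinct values. -/
def AtMostKValues {α β : Type*} (k : ℕ) (f : α → β) : Prop :=
  ∃ S : Finset β, S.card ≤ k ∧ ∀ x, f x ∈ S

/-- A map on the vertex set `Fin 3 × Fin n` has balanced fibers: each fiber contains
equally many vertices of each of the 3 colors. -/
def BalancedFibers {C : Type*} {n : ℕ} (F : Fin 3 × Fin n → C) : Prop :=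
  ∀ (z : C) (j j' : Fin 3),
    Nat.card {u : Fin n // F (j, u) = z} = Nat.card {u : Fin n // F (j', u) = z}

/-! A radius-one assignment never sends a vertex to itself: balance would put a vertex of another
color into the same fiber, at distance 2. So every vertex goes to an incident hyperedge, and balance
forces each hyperedge that is used to receive exactly its three endpoints, one per color; the used
hyperedges therefore form a perfect matching. Conversely, sending every vertex to the matching
edge that covers it is a balanced assignment with `n` centers. -/

open Finset Function

variable {n : ℕ}

def edgeCoord (j : Fin 3) (e : Fin n × Fin n × Fin n) : Fin n := ![e.1, e.2.1, e.2.2] j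

theorem incident_iff_edgeCoord (v : Fin 3 × Fin n) (e : Fin n × Fin n × Fin n) :
    Incident v e ↔ edgeCoord v.1 e = v.2 := by
  obtain ⟨j, u⟩ := v
  fin_cases j <;> simp [Incident, edgeCoord]

theorem forall_injOn_edgeCoord_iff {s : Set (Fin n × Fin n × Fin n)} :
    (∀ j, Set.InjOn (edgeCoord j) s) ↔
      Set.InjOn (fun e => e.1) s ∧ Set.InjOn (fun e => e.2.1) s ∧ Set.InjOn (fun e => e.2.2) s := by
  simp only [Fin.forall_fin_succ, IsEmpty.forall_iff, and_true]
  rfl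

theorem delta_inl_le_one_iff (E : Set (Fin n × Fin n × Fin n)) (v : Fin 3 × Fin n)
    (z : (Fin 3 × Fin n) ⊕ ↥E) :
    delta E (Sum.inl v) z ≤ 1 ↔ z = Sum.inl v ∨ ∃ e : ↥E, z = Sum.inr e ∧ Incident v e.1 := by
  rcases z with w | e
  · by_cases h : v = w
    · subst h; simp [delta]
    · simp [delta, h, Ne.symm h]
  · by_cases h : Incident v e.1 <;> simp [delta, h]

section BalancedFibers

variable {C D : Type*} {F : Fin 3 × Fin n → C}

theorem BalancedFibers.exists_apply_eq (hF : BalancedFibers F) (v : Fin 3 × Fin n) (j : Fin 3) :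
    ∃ u, F (j, u) = F v := by
  have hpos : 0 < Nat.card {u // F (v.1, u) = F v} := Nat.card_pos_iff.2 ⟨⟨⟨v.2, rfl⟩⟩, inferInstance⟩
  rw [hF (F v) v.1 j] at hpos
  obtain ⟨⟨u, hu⟩⟩ := (Nat.card_pos_iff.1 hpos).1
  exact ⟨u, hu⟩

theorem balancedFibers_comp_iff {f : C → D} (hf : Injective f) :
    BalancedFibers (f ∘ F) ↔ BalancedFibers F := by
  refine ⟨fun h z j j' => by simpa only [comp_apply, hf.eq_iff] using h (f z) j j', fun h z j j' => ?_⟩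
  by_cases hz : z ∈ Set.range f
  · obtain ⟨c, rfl⟩ := hz
    simpa only [comp_apply, hf.eq_iff] using h c j j'
  · have hempty (i : Fin 3) : IsEmpty {u // (f ∘ F) (i, u) = z} := ⟨fun ⟨u, hu⟩ => hz ⟨_, hu⟩⟩
    rw [Nat.card_of_isEmpty, Nat.card_of_isEmpty]

end BalancedFibers

def IsPerfectMatching (H : Finset (Fin n × Fin n × Fin n)) : Prop :=
  H.card = n ∧ ∀ j, Set.InjOn (edgeCoord j) (H : Set (Fin n × Fin n × Fin n))

section Assignment

variable {g : Fin 3 × Fin n → Fin n × Fin n × Fin n}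

theorem injOn_edgeCoord_range (hg : BalancedFibers g) (hinc : ∀ v, edgeCoord v.1 (g v) = v.2)
    (j : Fin 3) : Set.InjOn (edgeCoord j) (Set.range g) := by
  rintro _ ⟨v, rfl⟩ _ ⟨w, rfl⟩ h
  obtain ⟨u, hu⟩ := hg.exists_apply_eq v j
  obtain ⟨u', hu'⟩ := hg.exists_apply_eq w j
  have : u = u' := calc
    u = edgeCoord j (g (j, u)) := (hinc (j, u)).symm
    _ = edgeCoord j (g (j, u')) := by rw [hu, hu', h]
    _ = u' := hinc (j, u')
  rw [← hu, ← hu', this]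

theorem isPerfectMatching_image (hg : BalancedFibers g) (hinc : ∀ v, edgeCoord v.1 (g v) = v.2) :
    IsPerfectMatching (univ.image g) := by
  have hinj (j : Fin 3) : Set.InjOn (edgeCoord j) (univ.image g : Set (Fin n × Fin n × Fin n)) := by
    simpa only [coe_image, coe_univ, Set.image_univ] using injOn_edgeCoord_range hg hinc j
  have hsurj : (univ.image g).image (edgeCoord 0) = univ :=
    eq_univ_of_forall fun u => mem_image.2 ⟨g (0, u), mem_image_of_mem _ (mem_univ _), hinc (0, u)⟩
  refine ⟨?_, hinj⟩
  rw [← card_image_of_injOn (hinj 0), hsurj, card_univ, Fintype.card_fin]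

theorem IsPerfectMatching.exists_mem_edgeCoord_eq {H : Finset (Fin n × Fin n × Fin n)}
    (hH : IsPerfectMatching H) (j : Fin 3) (u : Fin n) : ∃ e ∈ H, edgeCoord j e = u := by
  have himage : H.image (edgeCoord j) = univ :=
    eq_univ_of_card _ (by rw [card_image_of_injOn (hH.2 j), hH.1, Fintype.card_fin])
  exact mem_image.1 (himage ▸ mem_univ u)

theorem IsPerfectMatching.balancedFibers {H : Finset (Fin n × Fin n × Fin n)}
    (hH : IsPerfectMatching H) (hgH : ∀ v, g v ∈ H) (hinc : ∀ v, edgeCoord v.1 (g v) = v.2) :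
    BalancedFibers g := by
  suffices hcard : ∀ e j, Nat.card {u // g (j, u) = e} = if e ∈ H then 1 else 0 from
    fun e j j' => by rw [hcard, hcard]
  intro e j
  split_ifs with he
  · have hfiber (u : Fin n) : g (j, u) = e ↔ u = edgeCoord j e :=
      ⟨by rintro rfl; exact (hinc (j, u)).symm,
        fun hu => hH.2 j (hgH _) he ((hinc (j, u)).trans hu)⟩
    simp only [hfiber, Nat.card_unique]
  · have : IsEmpty {u // g (j, u) = e} := ⟨fun ⟨u, hu⟩ => he (hu ▸ hgH _)⟩
    exact Nat.card_of_isEmpty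

end Assignment

section FairCenter

variable {E : Set (Fin n × Fin n × Fin n)}

theorem exists_incident_of_delta_le_one {F : Fin 3 × Fin n → (Fin 3 × Fin n) ⊕ ↥E}
    (hF : BalancedFibers F) (hdist : ∀ v, delta E (Sum.inl v) (F v) ≤ 1) (v : Fin 3 × Fin n) :
    ∃ e : ↥E, F v = Sum.inr e ∧ Incident v e.1 := by
  refine ((delta_inl_le_one_iff E v _).1 (hdist v)).resolve_left fun hv => ?_
  -- a fiber containing `v` contains a vertex of another color, which is at distance 2 from `v`
  obtain ⟨u, hu⟩ := hF.exists_apply_eq v (v.1 + 1)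
  rcases (delta_inl_le_one_iff E _ _).1 (hdist (v.1 + 1, u)) with h | ⟨e, h, -⟩
  · have hsucc_ne : ∀ j : Fin 3, j + 1 ≠ j := by decide
    exact hsucc_ne v.1 (congrArg Prod.fst (Sum.inl_injective (h.symm.trans (hu.trans hv))))
  · exact Sum.inr_ne_inl (h.symm.trans (hu.trans hv))

theorem exists_isPerfectMatching_of_delta_le_one {F : Fin 3 × Fin n → (Fin 3 × Fin n) ⊕ ↥E}
    (hF : BalancedFibers F) (hdist : ∀ v, delta E (Sum.inl v) (F v) ≤ 1) :
    ∃ H : Finset (Fin n × Fin n × Fin n), ↑H ⊆ E ∧ IsPerfectMatching H := by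
  choose g hFg hinc using exists_incident_of_delta_le_one hF hdist
  obtain rfl : F = Sum.inr ∘ g := funext hFg
  have hg : BalancedFibers (Subtype.val ∘ g) :=
    (balancedFibers_comp_iff Subtype.val_injective).2 ((balancedFibers_comp_iff Sum.inr_injective).1 hF)
  refine ⟨univ.image (Subtype.val ∘ g), ?_,
    isPerfectMatching_image hg fun v => (incident_iff_edgeCoord v _).1 (hinc v)⟩
  simp only [coe_image, coe_univ, Set.image_univ, Set.range_comp, Set.image_subset_iff,
    Subtype.coe_preimage_self, Set.subset_univ]

theorem IsPerfectMatching.exists_fair_center {H : Finset (Fin n × Fin n × Fin n)}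
    (hH : IsPerfectMatching H) (hHE : ↑H ⊆ E) :
    ∃ F : Fin 3 × Fin n → (Fin 3 × Fin n) ⊕ ↥E,
      AtMostKValues n F ∧ BalancedFibers F ∧ ∀ v, delta E (Sum.inl v) (F v) ≤ 1 := by
  choose g hgH hinc using fun v : Fin 3 × Fin n => hH.exists_mem_edgeCoord_eq v.1 v.2
  let gE : Fin 3 × Fin n → ↥E := fun v => ⟨g v, hHE (hgH v)⟩
  refine ⟨Sum.inr ∘ gE, ⟨H.attach.image fun e => Sum.inr ⟨e.1, hHE e.2⟩, ?_, ?_⟩, ?_, ?_⟩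
  · exact card_image_le.trans (by rw [card_attach, hH.1])
  · exact fun v => mem_image.2 ⟨⟨g v, hgH v⟩, mem_attach _ _, rfl⟩
  · exact (balancedFibers_comp_iff Sum.inr_injective).2
      ((balancedFibers_comp_iff (F := gE) Subtype.val_injective).1 (hH.balancedFibers hgH hinc))
  · exact fun v => (delta_inl_le_one_iff E v _).2
      (Or.inr ⟨gE v, rfl, (incident_iff_edgeCoord v _).2 (hinc v)⟩)

end FairCenter

theorem fair_center_radius_one_iff_perfect_matching_general {n : ℕ}
    (E : Set (Fin n × Fin n × Fin n)) :
    (∃ F : Fin 3 × Fin n → (Fin 3 × Fin n) ⊕ ↥E,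
        AtMostKValues n F ∧ BalancedFibers F ∧
          ∀ v : Fin 3 × Fin n, delta E (Sum.inl v) (F v) ≤ 1) ↔
      ∃ H : Finset (Fin n × Fin n × Fin n), ↑H ⊆ E ∧ H.card = n ∧
        Set.InjOn (fun e : Fin n × Fin n × Fin n => e.1) ↑H ∧
        Set.InjOn (fun e : Fin n × Fin n × Fin n => e.2.1) ↑H ∧
        Set.InjOn (fun e : Fin n × Fin n × Fin n => e.2.2) ↑H := by
  constructor
  · rintro ⟨F, -, hF, hdist⟩
    obtain ⟨H, hHE, hcard, hinj⟩ := exists_isPerfectMatching_of_delta_le_one hF hdist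
    exact ⟨H, hHE, hcard, forall_injOn_edgeCoord_iff.1 hinj⟩
  · rintro ⟨H, hHE, hcard, hinj⟩
    exact IsPerfectMatching.exists_fair_center ⟨hcard, forall_injOn_edgeCoord_iff.2 hinj⟩ hHE

/-- There is a fair `n`-center clustering of radius `1` of the 3-dimensional matching
instance iff the hypergraph has a perfect matching. -/
theorem fair_center_radius_one_iff_perfect_matching {n : ℕ} (hn : 1 ≤ n)
    (E : Set (Fin n × Fin n × Fin n)) :
    (∃ F : Fin 3 × Fin n → (Fin 3 × Fin n) ⊕ ↥E,
        AtMostKValues n F ∧ BalancedFibers F ∧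
          ∀ v : Fin 3 × Fin n, delta E (Sum.inl v) (F v) ≤ 1) ↔
      ∃ H : Finset (Fin n × Fin n × Fin n), ↑H ⊆ E ∧ H.card = n ∧
        Set.InjOn (fun e : Fin n × Fin n × Fin n => e.1) ↑H ∧
        Set.InjOn (fun e : Fin n × Fin n × Fin n => e.2.1) ↑H ∧
        Set.InjOn (fun e : Fin n × Fin n × Fin n => e.2.2) ↑H :=
  fair_center_radius_one_iff_perfect_matching_general E
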